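/- arXiv:1709.08075 — 3 statements merged into one kernel-verified Lean document; each statement's English description precedes it below -/
import Mathlib

section
/- Let F : ℝ → ℝ ∪ {+∞} be proper, convex and lower semicontinuous, with convex conjugate F*. Then for every x > 0 and y ∈ ℝ, x·F(y/x) = sup { a·x + b·y : (a,b) ∈ ℝ², a + F*(b) ≤ 0 } (as an equality in ℝ ∪ {+∞}). -/
/-!
With `t = y / x` one has `a x + b y = x (a + b t)`, and the constraint `a + F*(b) ≤ 0` says
exactly that `s ↦ a + b s` is an affine minorant of `F`. So the claim is that `F` is the
pointwise supremum of its affine minorants (Fenchel–Moreau). This is a statement about the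
epigraph of `F`, a closed convex subset of the plane that is closed upwards: a point outside it
is strictly separated from it by a line. The line is non-vertical when the point lies over a
point of the epigraph; otherwise one adds a large multiple of the vertical separating line to an
affine minorant, which exists because `F` takes a finite value somewhere.
-/

/-- The convex conjugate of `F : ℝ → ℝ ∪ {+∞}`:
`F*(b) = sup_y (y·b - F y)`, with values in the extended reals. -/
noncomputable def erealConjugate (F : ℝ → EReal) (b : ℝ) : EReal :=
  ⨆ y : ℝ, ((y * b : ℝ) : EReal) - F y

namespace PlaneEpigraph

variable {E : Set (ℝ × ℝ)}

theorem exists_separating_line (hconv : Convex ℝ E) (hclosed : IsClosed E) {p : ℝ × ℝ}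
    (hp : p ∉ E) :
    ∃ β γ c : ℝ, β * p.1 + γ * p.2 < c ∧ ∀ q ∈ E, c < β * q.1 + γ * q.2 := by
  obtain ⟨f, c, hfp, hfE⟩ := geometric_hahn_banach_point_closed hconv hclosed hp
  have hf : ∀ q : ℝ × ℝ, f q = f (1, 0) * q.1 + f (0, 1) * q.2 := fun q => by
    have hq : q = q.1 • ((1 : ℝ), (0 : ℝ)) + q.2 • ((0 : ℝ), (1 : ℝ)) := by ext <;> simp
    conv_lhs => rw [hq, map_add, map_smul, map_smul, smul_eq_mul, smul_eq_mul]
    ring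
  exact ⟨f (1, 0), f (0, 1), c, hf p ▸ hfp, fun q hq => hf q ▸ hfE q hq⟩

theorem nonneg_of_forall_mem_lt (hup : ∀ q ∈ E, ∀ u, q.2 ≤ u → (q.1, u) ∈ E)
    {β γ c : ℝ} (hne : E.Nonempty) (hsep : ∀ q ∈ E, c < β * q.1 + γ * q.2) : 0 ≤ γ := by
  obtain ⟨q, hq⟩ := hne
  by_contra! hγ
  set u := max q.2 ((c - β * q.1) / γ)
  have hγu : γ * u ≤ c - β * q.1 := by
    have := mul_le_mul_of_nonpos_left (le_max_right q.2 ((c - β * q.1) / γ)) hγ.le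
    rwa [mul_div_cancel₀ _ hγ.ne] at this
  have := hsep _ (hup q hq u (le_max_left _ _))
  linarith

theorem exists_line_below_of_separation {p : ℝ × ℝ} {β γ c : ℝ} (hγ : 0 < γ)
    (hp : β * p.1 + γ * p.2 < c) (hsep : ∀ q ∈ E, c < β * q.1 + γ * q.2) :
    ∃ a b : ℝ, (∀ q ∈ E, a + b * q.1 ≤ q.2) ∧ p.2 < a + b * p.1 := by
  have hline : ∀ s, c / γ + -β / γ * s = (c - β * s) / γ := fun s => by ring
  refine ⟨c / γ, -β / γ, fun q hq => ?_, ?_⟩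
  · rw [hline, div_le_iff₀ hγ]
    linarith [hsep q hq]
  · rw [hline, lt_div_iff₀ hγ]
    linarith

theorem exists_line_below_of_mem_vertical (hconv : Convex ℝ E) (hclosed : IsClosed E)
    (hup : ∀ q ∈ E, ∀ u, q.2 ≤ u → (q.1, u) ∈ E) {p : ℝ × ℝ} (hp : p ∉ E) {u : ℝ}
    (hu : (p.1, u) ∈ E) :
    ∃ a b : ℝ, (∀ q ∈ E, a + b * q.1 ≤ q.2) ∧ p.2 < a + b * p.1 := by
  obtain ⟨β, γ, c, hpc, hsep⟩ := exists_separating_line hconv hclosed hp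
  have hγ : 0 ≤ γ := nonneg_of_forall_mem_lt hup ⟨_, hu⟩ hsep
  refine exists_line_below_of_separation (hγ.lt_of_ne fun hγ0 => ?_) hpc hsep
  have := hsep _ hu
  subst hγ0
  linarith

/-- Tilting a line below `E` by a multiple of a vertical separating line pushes it above `p`. -/
theorem exists_line_below_of_notMem (hconv : Convex ℝ E) (hclosed : IsClosed E)
    (hup : ∀ q ∈ E, ∀ u, q.2 ≤ u → (q.1, u) ∈ E) {a₀ b₀ : ℝ}
    (hbelow : ∀ q ∈ E, a₀ + b₀ * q.1 ≤ q.2) (hne : E.Nonempty) {p : ℝ × ℝ} (hp : p ∉ E) :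
    ∃ a b : ℝ, (∀ q ∈ E, a + b * q.1 ≤ q.2) ∧ p.2 < a + b * p.1 := by
  obtain ⟨β, γ, c, hpc, hsep⟩ := exists_separating_line hconv hclosed hp
  rcases (nonneg_of_forall_mem_lt hup hne hsep).lt_or_eq with hγ | rfl
  · exact exists_line_below_of_separation hγ hpc hsep
  simp only [zero_mul, add_zero] at hpc hsep
  obtain ⟨n, hn⟩ := exists_nat_gt ((p.2 - (a₀ + b₀ * p.1)) / (c - β * p.1))
  rw [div_lt_iff₀ (by linarith)] at hn
  refine ⟨a₀ + n * c, b₀ - n * β, fun q hq => ?_, by linarith⟩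
  have := mul_le_mul_of_nonneg_left (hsep q hq).le n.cast_nonneg
  linarith [hbelow q hq]

end PlaneEpigraph

def epigraph (F : ℝ → EReal) : Set (ℝ × ℝ) := {q | F q.1 ≤ q.2}

section

open PlaneEpigraph

variable {F : ℝ → EReal}

theorem convex_epigraph
    (hconv : ∀ y z : ℝ, ∀ s t : ℝ, 0 ≤ s → 0 ≤ t → s + t = 1 →
      F (s * y + t * z) ≤ (s : EReal) * F y + (t : EReal) * F z) :
    Convex ℝ (epigraph F) := by
  intro p hp q hq s t hs ht hst
  calc F (s * p.1 + t * q.1) ≤ (s : EReal) * F p.1 + (t : EReal) * F q.1 :=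
        hconv _ _ s t hs ht hst
    _ ≤ (s : EReal) * p.2 + (t : EReal) * q.2 := by
        gcongr
        exacts [hp, hq]
    _ = ((s • p + t • q).2 : ℝ) := by simp

theorem isClosed_epigraph (hlsc : LowerSemicontinuous F) : IsClosed (epigraph F) :=
  hlsc.isClosed_epigraph.preimage <|
    continuous_fst.prodMk (continuous_coe_real_ereal.comp continuous_snd)

theorem mem_epigraph_of_le {q : ℝ × ℝ} (hq : q ∈ epigraph F) {u : ℝ} (hu : q.2 ≤ u) :
    (q.1, u) ∈ epigraph F :=
  hq.trans (EReal.coe_le_coe_iff.mpr hu)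

theorem affine_le_iff_forall_mem_epigraph {a b : ℝ} :
    (∀ s, ((a + b * s : ℝ) : EReal) ≤ F s) ↔ ∀ q ∈ epigraph F, a + b * q.1 ≤ q.2 :=
  ⟨fun h q hq => EReal.coe_le_coe_iff.mp ((h q.1).trans hq),
    fun h s => EReal.le_of_forall_lt_iff_le.mp fun u hu =>
      EReal.coe_le_coe_iff.mpr (h (s, u) hu.le)⟩

theorem exists_affine_le (hconv : Convex ℝ (epigraph F)) (hclosed : IsClosed (epigraph F))
    {s₀ : ℝ} (htop : F s₀ ≠ ⊤) (hbot : F s₀ ≠ ⊥) :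
    ∃ a b : ℝ, ∀ s, ((a + b * s : ℝ) : EReal) ≤ F s := by
  have hv := (EReal.coe_toReal htop hbot).symm
  have hmem : (s₀, (F s₀).toReal) ∈ epigraph F := hv.le
  have hnotMem : (s₀, (F s₀).toReal - 1) ∉ epigraph F := fun h => by
    have : (F s₀).toReal ≤ (F s₀).toReal - 1 := EReal.coe_le_coe_iff.mp (hv ▸ h)
    linarith
  obtain ⟨a, b, hbelow, -⟩ := exists_line_below_of_mem_vertical hconv hclosed
    (fun _ => mem_epigraph_of_le) hnotMem hmem
  exact ⟨a, b, affine_le_iff_forall_mem_epigraph.mpr hbelow⟩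

theorem exists_affine_le_gt (hconv : Convex ℝ (epigraph F)) (hclosed : IsClosed (epigraph F))
    {s₀ : ℝ} (htop : F s₀ ≠ ⊤) (hbot : F s₀ ≠ ⊥) {t r : ℝ} (hr : (r : EReal) < F t) :
    ∃ a b : ℝ, (∀ s, ((a + b * s : ℝ) : EReal) ≤ F s) ∧ r < a + b * t := by
  obtain ⟨a₀, b₀, h₀⟩ := exists_affine_le hconv hclosed htop hbot
  obtain ⟨a, b, hbelow, hlt⟩ := exists_line_below_of_notMem (p := (t, r)) hconv hclosed
    (fun _ => mem_epigraph_of_le) (affine_le_iff_forall_mem_epigraph.mp h₀)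
    ⟨(s₀, (F s₀).toReal), (EReal.coe_toReal htop hbot).ge⟩ hr.not_ge
  exact ⟨a, b, affine_le_iff_forall_mem_epigraph.mpr hbelow, hlt⟩

theorem coe_add_erealConjugate_nonpos_iff {a b : ℝ} :
    (a : EReal) + erealConjugate F b ≤ 0 ↔ ∀ s, ((a + b * s : ℝ) : EReal) ≤ F s := by
  have hadd : ∀ X : EReal, (a : EReal) + X ≤ 0 ↔ X ≤ ((-a : ℝ) : EReal) := fun X => by
    induction X using EReal.rec with
    | bot => simp
    | top => simp
    | coe x => norm_cast; constructor <;> intro <;> linarith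
  have hsub : ∀ (s : ℝ) (X : EReal), ((s * b : ℝ) : EReal) - X ≤ ((-a : ℝ) : EReal) ↔
      ((a + b * s : ℝ) : EReal) ≤ X := fun s X => by
    induction X using EReal.rec with
    | bot =>
      simp only [EReal.coe_sub_bot, top_le_iff, le_bot_iff, EReal.coe_ne_top, EReal.coe_ne_bot]
    | top => simp only [EReal.sub_top, bot_le, le_top]
    | coe x => norm_cast; constructor <;> intro <;> linarith
  simp only [hadd, erealConjugate, iSup_le_iff, hsub]

end

/-- for proper, convex, lower semicontinuous `F : ℝ → ℝ ∪ {+∞}`,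
for all `x > 0` and `y ∈ ℝ`,
`x·F(y/x) = sup { a·x + b·y : (a,b) ∈ ℝ², a + F*(b) ≤ 0 }`. -/
theorem perspective_eq_sup_over_conjugate_constraint (F : ℝ → EReal)
    (hne_bot : ∀ y, F y ≠ ⊥)
    (hproper : ∃ y, F y ≠ ⊤)
    (hconv : ∀ y z : ℝ, ∀ s t : ℝ, 0 ≤ s → 0 ≤ t → s + t = 1 →
      F (s * y + t * z) ≤ (s : EReal) * F y + (t : EReal) * F z)
    (hlsc : LowerSemicontinuous F)
    (x : ℝ) (hx : 0 < x) (y : ℝ) :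
    (x : EReal) * F (y / x) =
      ⨆ p ∈ {q : ℝ × ℝ | (q.1 : EReal) + erealConjugate F q.2 ≤ 0},
        ((p.1 * x + p.2 * y : ℝ) : EReal) := by
  obtain ⟨s₀, hs₀⟩ := hproper
  have hscale : ∀ p : ℝ × ℝ, p.1 * x + p.2 * y = x * (p.1 + p.2 * (y / x)) := fun p => by
    field_simp
  simp only [Set.mem_ofPred_eq, coe_add_erealConjugate_nonpos_iff, hscale, EReal.coe_mul]
  apply le_antisymm
  · refine EReal.ge_of_forall_gt_iff_ge.mp fun w hw => ?_
    have hw' : ((w / x : ℝ) : EReal) < F (y / x) := by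
      rwa [EReal.coe_div, EReal.div_lt_iff (by exact_mod_cast hx) (EReal.coe_ne_top x), mul_comm]
    obtain ⟨a, b, hab, hlt⟩ := exists_affine_le_gt (convex_epigraph hconv)
      (isClosed_epigraph hlsc) hs₀ (hne_bot s₀) hw'
    refine le_iSup₂_of_le (a, b) hab ?_
    rw [← EReal.coe_mul]
    exact_mod_cast ((div_lt_iff₀' hx).mp hlt).le
  · exact iSup₂_le fun p hp => mul_le_mul_of_nonneg_left (hp _) (by exact_mod_cast hx.le)
end

section
/- Let ρ : ℝ → ℝ be a continuous, nonnegative, integrable function with ∫_ℝ |x| ρ(x) dx < ∞, and define the call price function C(K) := ∫_ℝ max(x − K, 0) ρ(x) dx for K ∈ ℝ. Then C is twice differentiable on ℝ with C'(K) = −∫_{K}^{∞} ρ(x) dx and C''(K) = ρ(K) for every K. (Breeden–Litzenberger formula.) -/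
/-!
The payoff `(x - k)⁺` is Lipschitz in `k` with derivative `-𝟙{x > K}` at every `K ≠ x`.
With the first moment of `ρ` as dominating function we may differentiate under the integral
sign, which gives `C'(K) = -∫_K^∞ ρ`. Up to an additive constant this tail is `∫_0^K ρ`, so the
fundamental theorem of calculus at the continuity point `K` gives `C''(K) = ρ(K)`.
-/

open MeasureTheory Set Filter

lemma lipschitzWith_max_sub_zero_mul (x c : ℝ) :
    LipschitzWith (Real.nnabs c) fun k : ℝ => max (x - k) 0 * c := by
  refine LipschitzWith.of_dist_le_mul fun k l => ?_
  rw [Real.dist_eq, Real.dist_eq, ← sub_mul, abs_mul, Real.coe_nnabs, mul_comm]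
  have hmax : |max (x - k) 0 - max (x - l) 0| ≤ |k - l| := by
    simpa [abs_sub_comm] using abs_max_sub_max_le_abs (x - k) (x - l) 0
  exact mul_le_mul_of_nonneg_left hmax (abs_nonneg c)

lemma abs_max_sub_zero_le (x k : ℝ) : |max (x - k) 0| ≤ |x| + |k| := by
  rw [abs_of_nonneg (le_max_right _ _)]
  exact (max_le (le_abs_self _) (abs_nonneg _)).trans (abs_sub _ _)

lemma hasDerivAt_max_sub_zero_of_lt {x K : ℝ} (h : x < K) :
    HasDerivAt (fun k : ℝ => max (x - k) 0) 0 K := by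
  refine (hasDerivAt_const K (0 : ℝ)).congr_of_eventuallyEq ?_
  filter_upwards [Ioi_mem_nhds h] with k hk
  exact max_eq_right (sub_nonpos.2 (le_of_lt hk))

lemma hasDerivAt_max_sub_zero_of_gt {x K : ℝ} (h : K < x) :
    HasDerivAt (fun k : ℝ => max (x - k) 0) (-1) K := by
  refine ((hasDerivAt_id K).const_sub x).congr_of_eventuallyEq ?_
  filter_upwards [Iio_mem_nhds h] with k hk
  exact max_eq_left (sub_nonneg.2 (le_of_lt hk))

section CallPrice

variable {ρ : ℝ → ℝ}

lemma integrable_max_sub_zero_mul (hint : Integrable ρ)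
    (hmom : Integrable fun x => |x| * ρ x) (k : ℝ) :
    Integrable fun x => max (x - k) 0 * ρ x := by
  refine (hmom.norm.add (hint.norm.const_mul |k|)).mono'
    (((continuous_sub_right k).max continuous_const).aestronglyMeasurable.mul
      hint.aestronglyMeasurable) (Eventually.of_forall fun x => ?_)
  simp only [norm_mul, Real.norm_eq_abs, abs_abs, Pi.add_apply, ← add_mul]
  exact mul_le_mul_of_nonneg_right (abs_max_sub_zero_le x k) (abs_nonneg _)

theorem hasDerivAt_integral_max_sub_zero_mul (hint : Integrable ρ)
    (hmom : Integrable fun x => |x| * ρ x) (K : ℝ) :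
    HasDerivAt (fun k => ∫ x, max (x - k) 0 * ρ x) (-∫ x in Ioi K, ρ x) K := by
  have hlip : ∀ᵐ x : ℝ,
      LipschitzOnWith (Real.nnabs (ρ x)) (fun k => max (x - k) 0 * ρ x) univ :=
    Eventually.of_forall fun x => (lipschitzWith_max_sub_zero_mul x (ρ x)).lipschitzOnWith
  have hdiff : ∀ᵐ x : ℝ, HasDerivAt (fun k => max (x - k) 0 * ρ x)
      ((Ioi K).indicator (fun x => -ρ x) x) K := by
    filter_upwards [Measure.ae_ne volume K] with x hx
    rcases hx.lt_or_gt with h | h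
    · rw [indicator_of_notMem (notMem_Ioi.2 h.le)]
      simpa using (hasDerivAt_max_sub_zero_of_lt h).mul_const (ρ x)
    · rw [indicator_of_mem (mem_Ioi.2 h)]
      simpa using (hasDerivAt_max_sub_zero_of_gt h).mul_const (ρ x)
  have key := hasDerivAt_integral_of_dominated_loc_of_lip univ_mem
    (Eventually.of_forall fun k => (integrable_max_sub_zero_mul hint hmom k).aestronglyMeasurable)
    (integrable_max_sub_zero_mul hint hmom K)
    (hint.neg.aestronglyMeasurable.indicator measurableSet_Ioi) hlip hint hdiff
  simpa only [integral_indicator measurableSet_Ioi, Pi.neg_apply, integral_neg] using key.2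

theorem hasDerivAt_neg_integral_Ioi (hint : Integrable ρ) {K : ℝ} (hK : ContinuousAt ρ K) :
    HasDerivAt (fun k => -∫ x in Ioi k, ρ x) (ρ K) K := by
  have htail : ∀ k, -∫ x in Ioi k, ρ x =
      (∫ x in (0 : ℝ)..k, ρ x) + ((∫ x in Iic 0, ρ x) - ∫ x, ρ x) := by
    intro k
    have hsplit := intervalIntegral.integral_Iic_add_Ioi (b := k) hint.integrableOn
      hint.integrableOn
    have hIic := intervalIntegral.integral_Iic_sub_Iic (a := 0) (b := k) hint.integrableOn
      hint.integrableOn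
    linarith
  simp only [htail]
  exact (intervalIntegral.integral_hasDerivAt_right hint.intervalIntegrable
    hint.aestronglyMeasurable.stronglyMeasurableAtFilter hK).add_const _

end CallPrice

theorem breeden_litzenberger_general (ρ : ℝ → ℝ)
    (hcont : Continuous ρ)
    (hint : Integrable ρ)
    (hmom : Integrable (fun x => |x| * ρ x)) :
    ∀ K : ℝ,
      HasDerivAt (fun k : ℝ => ∫ x, max (x - k) 0 * ρ x)
        (-(∫ x in Set.Ioi K, ρ x)) K ∧
      HasDerivAt (deriv (fun k : ℝ => ∫ x, max (x - k) 0 * ρ x)) (ρ K) K := by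
  have hfirst := hasDerivAt_integral_max_sub_zero_mul hint hmom
  intro K
  refine ⟨hfirst K, ?_⟩
  rw [show deriv (fun k => ∫ x, max (x - k) 0 * ρ x) = fun k => -∫ x in Ioi k, ρ x from
    funext fun k => (hfirst k).deriv]
  exact hasDerivAt_neg_integral_Ioi hint hcont.continuousAt

/-- Breeden–Litzenberger: if `ρ` is a continuous, nonnegative,
integrable density with finite first moment, then the call price
`C(K) = ∫ (x − K)⁺ ρ(x) dx` is twice differentiable, with
`C'(K) = −∫_K^∞ ρ` and `C''(K) = ρ(K)`. -/
theorem breeden_litzenberger (ρ : ℝ → ℝ)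
    (hcont : Continuous ρ) (hnonneg : ∀ x, 0 ≤ ρ x)
    (hint : Integrable ρ)
    (hmom : Integrable (fun x => |x| * ρ x)) :
    ∀ K : ℝ,
      HasDerivAt (fun k : ℝ => ∫ x, max (x - k) 0 * ρ x)
        (-(∫ x in Set.Ioi K, ρ x)) K ∧
      HasDerivAt (deriv (fun k : ℝ => ∫ x, max (x - k) 0 * ρ x)) (ρ K) K :=
  breeden_litzenberger_general ρ hcont hint hmom
end

section
/- Let m ∈ ℝ and 0 < s₀ ≤ s₁. Then for every convex function φ : ℝ → ℝ that is integrable with respect to both the Gaussian measures N(m, s₀²) and N(m, s₁²), one has ∫ φ dN(m, s₀²) ≤ ∫ φ dN(m, s₁²). In particular, the pair of marginals (N(m, s₀²), N(m, s₁²)) satisfies the convex-order condition required by Strassen's theorem for the existence of a martingale transport plan. -/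
open MeasureTheory ProbabilityTheory
open scoped NNReal

/-! The centred Gaussian of variance `v₀ ≤ v₁` is the image of the one of variance `v₁` under
`x ↦ a x` with `|a| ≤ 1`. For a measure `μ` invariant under `x ↦ -x` and a convex `φ`, writing
`a x = t x + u (-x)` with `t = (1 + a)/2`, `u = (1 - a)/2` gives
`φ (a x) ≤ t φ x + u φ (-x)`, and both terms on the right integrate to `∫ φ dμ`. -/

def ConvexOrderLE (μ ν : Measure ℝ) : Prop :=
  ∀ φ : ℝ → ℝ, ConvexOn ℝ Set.univ φ → Integrable φ μ → Integrable φ ν →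
    ∫ x, φ x ∂μ ≤ ∫ x, φ x ∂ν

theorem ConvexOn.integral_comp_mul_le {μ : Measure ℝ} [μ.IsNegInvariant] {φ : ℝ → ℝ}
    (hφ : ConvexOn ℝ Set.univ φ) {a : ℝ} (ha : |a| ≤ 1)
    (hφa : Integrable (fun x ↦ φ (a * x)) μ) (hφμ : Integrable φ μ) :
    ∫ x, φ (a * x) ∂μ ≤ ∫ x, φ x ∂μ := by
  obtain ⟨ha₁, ha₂⟩ := abs_le.mp ha
  obtain ⟨t, u, ht, hu, htu, hat⟩ : ∃ t u : ℝ, 0 ≤ t ∧ 0 ≤ u ∧ t + u = 1 ∧ a = t - u :=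
    ⟨(1 + a) / 2, (1 - a) / 2, by linarith, by linarith, by ring, by ring⟩
  have hφneg : Integrable (fun x ↦ φ (-x)) μ := hφμ.comp_neg
  have hpoint (x : ℝ) : φ (a * x) ≤ t * φ x + u * φ (-x) := by
    have h := hφ.2 (Set.mem_univ x) (Set.mem_univ (-x)) ht hu htu
    have hx : a * x = t * x + u * -x := by rw [hat]; ring
    simpa only [smul_eq_mul, hx] using h
  calc ∫ x, φ (a * x) ∂μ
      ≤ ∫ x, t * φ x + u * φ (-x) ∂μ :=
        integral_mono hφa ((hφμ.const_mul t).add (hφneg.const_mul u)) hpoint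
    _ = t * ∫ x, φ x ∂μ + u * ∫ x, φ (-x) ∂μ := by
        rw [integral_add (hφμ.const_mul t) (hφneg.const_mul u), integral_const_mul,
          integral_const_mul]
    _ = ∫ x, φ x ∂μ := by
        rw [integral_neg_eq_self, ← add_mul, htu, one_mul]

theorem ConvexOrderLE.map_const_add {μ ν : Measure ℝ} (h : ConvexOrderLE μ ν) (m : ℝ) :
    ConvexOrderLE (μ.map (m + ·)) (ν.map (m + ·)) := by
  intro φ hφ hμ hν
  have he := measurableEmbedding_addLeft m
  rw [he.integrable_map_iff] at hμ hν
  rw [he.integral_map, he.integral_map]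
  exact h _ (hφ.translate_right m) hμ hν

theorem convexOrderLE_map_const_mul (μ : Measure ℝ) [μ.IsNegInvariant] {a : ℝ} (ha : |a| ≤ 1) :
    ConvexOrderLE (μ.map (a * ·)) μ := by
  intro φ hφ hφa hφμ
  have hmeas : AEStronglyMeasurable φ (μ.map (a * ·)) :=
    (continuousOn_univ.mp (hφ.continuousOn isOpen_univ)).aestronglyMeasurable
  rw [integrable_map_measure hmeas (by fun_prop)] at hφa
  rw [integral_map (by fun_prop) hmeas]
  exact hφ.integral_comp_mul_le ha hφa hφμ

instance isNegInvariant_gaussianReal_zero (v : ℝ≥0) : (gaussianReal 0 v).IsNegInvariant :=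
  ⟨by simpa [Measure.neg_def] using gaussianReal_map_neg (μ := 0) (v := v)⟩

theorem gaussianReal_zero_eq_map_const_mul {v₀ v₁ : ℝ≥0} (hv : v₀ ≤ v₁) :
    ∃ a : ℝ, |a| ≤ 1 ∧ gaussianReal 0 v₀ = (gaussianReal 0 v₁).map (a * ·) := by
  have hq : (0 : ℝ) ≤ v₀ / v₁ := by positivity
  refine ⟨Real.sqrt (v₀ / v₁), ?_, ?_⟩
  · rw [abs_of_nonneg (Real.sqrt_nonneg _), Real.sqrt_le_one]
    exact div_le_one_of_le₀ hv v₁.2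
  · rw [gaussianReal_map_const_mul, mul_zero]
    congr
    ext
    simp only [NNReal.coe_mul, NNReal.coe_mk, Real.sq_sqrt hq]
    rcases eq_or_ne v₁ 0 with rfl | hv₁
    · simp [le_antisymm hv zero_le]
    · rw [div_mul_cancel₀ _ (NNReal.coe_ne_zero.mpr hv₁)]

theorem convexOrderLE_gaussianReal (m : ℝ) {v₀ v₁ : ℝ≥0} (hv : v₀ ≤ v₁) :
    ConvexOrderLE (gaussianReal m v₀) (gaussianReal m v₁) := by
  obtain ⟨a, ha, h₀⟩ := gaussianReal_zero_eq_map_const_mul hv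
  have hshift (v : ℝ≥0) : gaussianReal m v = (gaussianReal 0 v).map (m + ·) := by
    rw [gaussianReal_map_const_add, zero_add]
  rw [hshift, hshift, h₀]
  exact (convexOrderLE_map_const_mul _ ha).map_const_add m

theorem gaussian_convex_order_general (m : ℝ) (s₀ s₁ : ℝ≥0) (hs : s₀ ≤ s₁) :
    ∀ φ : ℝ → ℝ, ConvexOn ℝ Set.univ φ →
      Integrable φ (gaussianReal m (s₀ ^ 2)) →
      Integrable φ (gaussianReal m (s₁ ^ 2)) →
      ∫ x, φ x ∂(gaussianReal m (s₀ ^ 2)) ≤ ∫ x, φ x ∂(gaussianReal m (s₁ ^ 2)) :=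
  convexOrderLE_gaussianReal m (pow_le_pow_left₀ zero_le hs 2)

/-- Gaussians with common mean are increasing in the convex order as
the variance increases: for `0 < s₀ ≤ s₁` and every convex `φ` integrable with
respect to both `N(m, s₀²)` and `N(m, s₁²)`,
`∫ φ dN(m, s₀²) ≤ ∫ φ dN(m, s₁²)`. This is the convex-order condition of
Strassen's theorem for the existence of a martingale transport plan. -/
theorem gaussian_convex_order (m : ℝ) (s₀ s₁ : ℝ≥0) (hs₀ : 0 < s₀) (hs : s₀ ≤ s₁) :
    ∀ φ : ℝ → ℝ, ConvexOn ℝ Set.univ φ →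
      Integrable φ (gaussianReal m (s₀ ^ 2)) →
      Integrable φ (gaussianReal m (s₁ ^ 2)) →
      ∫ x, φ x ∂(gaussianReal m (s₀ ^ 2)) ≤ ∫ x, φ x ∂(gaussianReal m (s₁ ^ 2)) :=
  gaussian_convex_order_general m s₀ s₁ hs
end
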